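/- Let O be a non-empty 1-orientation on a connected graph G and let e be its bioriented edge. The following are equivalent: (a) O is e-rooted; (b) for every vertex v of G there exists an O-directed path from e to v; (c) for every edge e' of G there exists a 1-orientation O' on G whose bioriented edge is e' and such that O ∼ O'. -/

import Mathlib

/-!
Common framework: finite vertex-weighted multigraphs (loops and multiple edges
allowed), generalized orientations, divisors, contractions, and poset gadgets.

A graph is encoded by a finite set `V ⊆ ℕ` of vertices, a finite set `E ⊆ ℕ`
of edges, an "ends" function assigning to each edge its ordered pair of
end-vertices (the two components encode the two half-edges), and a weight
function `w : ℕ → ℕ`.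

A generalized orientation is a function `ℕ → Option EdgeDir`, where `none`
means the edge is absent (an orientation on a spanning subgraph `G − S` takes
the value `none` exactly on edges outside `E \ S`), `fwd`/`bwd` give the edge a
single direction, and `bi` makes the edge bioriented.
-/

open scoped Classical
open Finset

/-- Direction of an edge under a generalized orientation. -/
inductive EdgeDir : Type
  | fwd
  | bwd
  | bi
deriving DecidableEq

/-- Generalized orientation data. -/
abbrev Orient : Type := ℕ → Option EdgeDir

/-- The number of ending (target) half-edges at the vertex `v` of an edge with
end-pair `p`, given its direction `d`.  A one-way oriented edge has exactly
one target end; a bioriented edge has both ends as targets. -/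
def dirT : Option EdgeDir → ℕ × ℕ → ℕ → ℕ
  | none, _, _ => 0
  | some EdgeDir.fwd, p, v => if p.2 = v then 1 else 0
  | some EdgeDir.bwd, p, v => if p.1 = v then 1 else 0
  | some EdgeDir.bi, p, v => (if p.1 = v then 1 else 0) + (if p.2 = v then 1 else 0)

/-- Restriction of orientation data to the set `D` of kept edges. -/
def restr (O : Orient) (D : Finset ℕ) : Orient := fun e => if e ∈ D then O e else none

/-- A finite vertex-weighted multigraph. -/
structure WGraph : Type where
  V : Finset ℕ
  E : Finset ℕ
  ends : ℕ → ℕ × ℕ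
  w : ℕ → ℕ
  ends_mem : ∀ e ∈ E, (ends e).1 ∈ V ∧ (ends e).2 ∈ V

namespace WGraph

variable (G : WGraph)

/-- Edge set of the induced subgraph `(G−S)[Z]`: edges of `G − S` with both
ends in `Z`. -/
def indEdges (S Z : Finset ℕ) : Finset ℕ :=
  (G.E \ S).filter fun e => (G.ends e).1 ∈ Z ∧ (G.ends e).2 ∈ Z

/-- The cut `E(Z, Zᶜ)` in `G − S`: edges of `G − S` with exactly one end in `Z`. -/
def cutEdges (S Z : Finset ℕ) : Finset ℕ :=
  (G.E \ S).filter fun e =>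
    ((G.ends e).1 ∈ Z ∧ (G.ends e).2 ∉ Z) ∨ ((G.ends e).1 ∉ Z ∧ (G.ends e).2 ∈ Z)

/-- Adjacency via an edge belonging to `F ∩ E`. -/
def adjOn (F : Finset ℕ) (u v : ℕ) : Prop :=
  ∃ e ∈ F ∩ G.E, G.ends e = (u, v) ∨ G.ends e = (v, u)

/-- Number of connected components of the subgraph with vertex set `W` and
edge set `F`. -/
noncomputable def ncomp (W F : Finset ℕ) : ℕ :=
  Nat.card (Quot (fun u v : {x : ℕ // x ∈ W} => G.adjOn F u.1 v.1))

/-- The subgraph with vertex set `W` and edge set `F` is connected. -/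
def ConnSub (W F : Finset ℕ) : Prop := G.ncomp W F = 1

/-- `G` is connected. -/
def Connected : Prop := G.ConnSub G.V G.E

/-- Genus of the subgraph with vertex set `W` and edge set `F`:
`∑_{v ∈ W} w(v) − |W| + |F| + c`. -/
noncomputable def subGenus (W F : Finset ℕ) : ℤ :=
  (∑ v ∈ W, (G.w v : ℤ)) - (W.card : ℤ) + (((F ∩ G.E).card : ℤ)) + (G.ncomp W F : ℤ)

/-- The genus of `G`. -/
noncomputable def genus : ℤ := G.subGenus G.V G.E

/-- The degree of a vertex: the number of half-edges having `v` as end. -/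
def deg (v : ℕ) : ℕ :=
  ∑ e ∈ G.E, ((if (G.ends e).1 = v then 1 else 0) + (if (G.ends e).2 = v then 1 else 0))

/-- `e` is a bridge of `G − S`: removing it increases the number of connected
components. -/
def IsBridge (S : Finset ℕ) (e : ℕ) : Prop :=
  e ∈ G.E \ S ∧ G.ncomp G.V (G.E \ S) < G.ncomp G.V (G.E \ insert e S)

/-- The set of bridges of `G − S`. -/
noncomputable def bridges (S : Finset ℕ) : Finset ℕ := (G.E \ S).filter (G.IsBridge S)

/-- `T` is a cut of `G`, i.e. `T = E(Z, Zᶜ)` for some `∅ ⊊ Z ⊊ V`. -/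
def IsCut (T : Finset ℕ) : Prop :=
  ∃ Z, Z ⊆ G.V ∧ Z.Nonempty ∧ Z ≠ G.V ∧ T = G.cutEdges ∅ Z

/-- `W` is (the vertex set of) a connected component of `G − S`. -/
def IsCompOf (S W : Finset ℕ) : Prop :=
  W ⊆ G.V ∧ W.Nonempty ∧ G.ConnSub W (G.indEdges S W) ∧ G.cutEdges S W = ∅

/-- The poset `A^b_G`: for `b = 0` the sets `S ⊆ E` with `G − S` bridgeless,
for `b = 1` the sets `S ⊆ E` with `G − S` connected. -/
def Ab (b : ℕ) (S : Finset ℕ) : Prop :=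
  S ⊆ G.E ∧ ((b = 0 ∧ ∀ e, ¬ G.IsBridge S e) ∨ (b = 1 ∧ G.ConnSub G.V (G.E \ S)))

/-- `G` is a stable graph of genus `g`: connected, of genus `g`, and every
vertex of weight `0` has degree at least `3`. -/
noncomputable def Stable (g : ℕ) : Prop :=
  G.Connected ∧ G.genus = (g : ℤ) ∧ ∀ v ∈ G.V, G.w v = 0 → 3 ≤ G.deg v

/-! ### Generalized orientations on spanning subgraphs -/

/-- `O` is orientation data for the spanning subgraph `G − S` (it is defined
exactly on the edges of `G − S`). -/
def IsOrientOn (S : Finset ℕ) (O : Orient) : Prop :=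
  ∀ e, O e ≠ none ↔ e ∈ G.E \ S

/-- The set of bioriented edges of `O`. -/
def biE (O : Orient) : Finset ℕ := G.E.filter fun e => O e = some EdgeDir.bi

/-- `t^O_v`: the number of half-edges having `v` as target. -/
def tOr (O : Orient) (v : ℕ) : ℕ := ∑ e ∈ G.E, dirT (O e) (G.ends e) v

/-- `t^O(Z)`: the number of edges of `G − S` not contained in `(G−S)[Z]`
having a target in `Z`. -/
def tCut (S : Finset ℕ) (O : Orient) (Z : Finset ℕ) : ℕ :=
  ∑ e ∈ (G.E \ S) \ G.indEdges S Z, ∑ v ∈ Z, dirT (O e) (G.ends e) v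

/-- The divisor `d^O` of a `b`-orientation `O` on `G − S`:
`d^O_v = w(v) − 1 + t^O_v` if `G − S` has edges, and `d^O_v = w(v) − 1 + b`
otherwise; it is supported on `V`. -/
noncomputable def divOr (S : Finset ℕ) (b : ℕ) (O : Orient) : ℕ → ℤ :=
  fun v => if v ∈ G.V then
      (if G.E \ S = ∅ then (G.w v : ℤ) - 1 + (b : ℤ) else (G.w v : ℤ) - 1 + (G.tOr O v : ℤ))
    else 0

/-- Equivalence of generalized orientations on `G − S`:  both are orientations
on `G − S` and they have the same divisor. -/
noncomputable def equivOr (S : Finset ℕ) (b : ℕ) (O O' : Orient) : Prop :=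
  G.IsOrientOn S O ∧ G.IsOrientOn S O' ∧ G.divOr S b O = G.divOr S b O'

/-- `O` is a totally cyclic orientation on `G − S`: every nonempty cut
`E(Z,Zᶜ)` contains an edge with target in `Z` and an edge with target in `Zᶜ`. -/
def TotCyc (S : Finset ℕ) (O : Orient) : Prop :=
  ∀ Z : Finset ℕ, Z ⊆ G.V → Z.Nonempty → Z ≠ G.V → (G.cutEdges S Z).Nonempty →
    (∃ e ∈ G.cutEdges S Z, ∃ v ∈ Z, 0 < dirT (O e) (G.ends e) v) ∧
    (∃ e ∈ G.cutEdges S Z, ∃ v ∈ G.V \ Z, 0 < dirT (O e) (G.ends e) v)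

/-- `O` is `e₀`-rooted on `G − S`: for every `Z ⊊ V` with `e₀` an edge of
`(G−S)[Z]`, the cut `E(Z,Zᶜ)` contains an edge with target in `Zᶜ`. -/
def RootedAt (S : Finset ℕ) (O : Orient) (e₀ : ℕ) : Prop :=
  ∀ Z : Finset ℕ, Z ⊆ G.V → Z ≠ G.V → e₀ ∈ G.indEdges S Z →
    ∃ e ∈ G.cutEdges S Z, ∃ v ∈ G.V \ Z, 0 < dirT (O e) (G.ends e) v

/-- `O` is a rooted `1`-orientation on `G − S`:  it has exactly one bioriented
edge, at which it is rooted.  By convention, if `G − S` consists of a single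
vertex (and no edges), the empty orientation is rooted. -/
def Rooted1 (S : Finset ℕ) (O : Orient) : Prop :=
  (∃ e₀, G.biE O = {e₀} ∧ G.RootedAt S O e₀) ∨ (G.E \ S = ∅ ∧ G.V.card = 1)

/-- `O ∈ 𝒪^b(G−S)`:  for `b = 0`, a totally cyclic orientation on `G − S`;
for `b = 1`, a rooted `1`-orientation on `G − S`. -/
def MemOb (S : Finset ℕ) (b : ℕ) (O : Orient) : Prop :=
  G.IsOrientOn S O ∧
    ((b = 0 ∧ G.biE O = ∅ ∧ G.TotCyc S O) ∨ (b = 1 ∧ G.Rooted1 S O))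

/-- `O` is a `b`-orientation on `G − S` (exactly `b` bioriented edges; by
convention the empty orientation on a one-vertex edgeless graph counts as a
`1`-orientation). -/
def IsbOr (S : Finset ℕ) (b : ℕ) (O : Orient) : Prop :=
  G.IsOrientOn S O ∧
    ((G.biE O).card = b ∨ (G.E \ S = ∅ ∧ G.V.card = 1 ∧ b = 1))

/-! ### Posets of orientations on spanning subgraphs -/

/-- The order of `𝒪𝒫^b_G` on pairs `(S, O_S)`:  `(S,O_S) ≤ (T,O_T)` iff
`T ⊆ S` and the restriction of `O_T` to `G − S` is `O_S`. -/
def leOP (p q : Finset ℕ × Orient) : Prop :=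
  q.1 ⊆ p.1 ∧ restr q.2 (G.E \ p.1) = p.2

/-- The order of `𝒪̄𝒫^b_G` on pairs (representing classes): `(S,O̅_S) ≤ (T,O̅_T)`
iff `T ⊆ S` and some representative of `O̅_T` restricts on `G − S` to some
representative of `O̅_S`. -/
noncomputable def leOPbar (b : ℕ) (p q : Finset ℕ × Orient) : Prop :=
  q.1 ⊆ p.1 ∧ ∃ O', G.equivOr q.1 b O' q.2 ∧
    G.equivOr p.1 b (restr O' (G.E \ p.1)) p.2

/-- Equality in `𝒪̄𝒫^b_G`: same subgraph and equivalent orientations. -/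
noncomputable def eqOP (b : ℕ) (p q : Finset ℕ × Orient) : Prop :=
  p.1 = q.1 ∧ G.equivOr p.1 b p.2 q.2

/-- Membership in `𝒪𝒫^b_G`. -/
def POb (b : ℕ) (p : Finset ℕ × Orient) : Prop :=
  G.Ab b p.1 ∧ G.MemOb p.1 b p.2

/-! ### Stable divisors -/

/-- Stable divisors on `G − S` of degree `g(G−S) − c(G−S) + b` (`b = 0, 1`):
for `b = 1`, `G − S` is connected, the degree is `g(G−S)` and
`|d_Z| > g(Z) − 1` for every `Z ⊆ V`; for `b = 0`, the restriction of `d` to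
every connected component `W` of `G − S` has degree `g(W) − 1` and satisfies
`|d_Z| > g(Z) − 1` for every `∅ ≠ Z ⊊ W`. -/
noncomputable def StableDiv (S : Finset ℕ) (b : ℕ) (d : ℕ → ℤ) : Prop :=
  (∀ v, v ∉ G.V → d v = 0) ∧
  ((b = 1 ∧ G.ConnSub G.V (G.E \ S) ∧
      (∑ v ∈ G.V, d v) = G.subGenus G.V (G.E \ S) ∧
      ∀ Z ⊆ G.V, G.subGenus Z (G.indEdges S Z) - 1 < ∑ v ∈ Z, d v) ∨
   (b = 0 ∧ ∀ W, G.IsCompOf S W →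
      (∑ v ∈ W, d v) = G.subGenus W (G.indEdges S W) - 1 ∧
      ∀ Z ⊆ W, Z.Nonempty → Z ≠ W →
        G.subGenus Z (G.indEdges S Z) - 1 < ∑ v ∈ Z, d v))

/-! ### Contractions -/

/-- The relation identifying the two ends of each edge in `S₀`. -/
def conRel (S₀ : Finset ℕ) (u v : ℕ) : Prop :=
  ∃ e ∈ S₀ ∩ G.E, G.ends e = (u, v) ∨ G.ends e = (v, u)

/-- Representative (the least element) of the class of `v` under the
equivalence generated by identifying the ends of the edges in `S₀`. -/
noncomputable def crep (S₀ : Finset ℕ) (v : ℕ) : ℕ :=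
  sInf {u | Relation.EqvGen (G.conRel S₀) u v}

/-- The (weighted) edge contraction `G/S₀`: every connected component of the
subgraph spanned by `S₀` is contracted to a single vertex, whose weight is the
genus of that component; `E(G/S₀) = E(G) \ S₀`. -/
noncomputable def contract (S₀ : Finset ℕ) : WGraph where
  V := G.V.image (G.crep S₀)
  E := G.E \ S₀
  ends := fun e => (G.crep S₀ (G.ends e).1, G.crep S₀ (G.ends e).2)
  w := fun v =>
    (G.subGenus (G.V.filter fun u => G.crep S₀ u = v)
      (G.indEdges (G.E \ S₀) (G.V.filter fun u => G.crep S₀ u = v))).toNat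
  ends_mem := by
    intro e he
    rw [Finset.mem_sdiff] at he
    exact ⟨Finset.mem_image_of_mem _ (G.ends_mem e he.1).1,
           Finset.mem_image_of_mem _ (G.ends_mem e he.1).2⟩

/-- Deletion of the edges in `T` (a spanning subgraph, as a graph). -/
def ddel (T : Finset ℕ) : WGraph where
  V := G.V
  E := G.E \ T
  ends := G.ends
  w := G.w
  ends_mem := fun e he => G.ends_mem e (Finset.mem_sdiff.mp he).1

/-- Pullback `γ* T` of an edge set along the contraction `γ : G → G/S₀`:
`T ∪ (G−T)_br` for `b = 0`, and `T` for `b = 1`. -/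
noncomputable def pullStar (b : ℕ) (T : Finset ℕ) : Finset ℕ :=
  if b = 0 then T ∪ G.bridges T else T

/-- Pushforward of a divisor along the contraction `γ : G → G/S₀`:
`(γ_* d)_v = ∑_{z ∈ γ⁻¹(v)} d_z`. -/
noncomputable def pushDiv (S₀ : Finset ℕ) (d : ℕ → ℤ) : ℕ → ℤ :=
  fun v => ∑ z ∈ G.V.filter (fun u => G.crep S₀ u = v), d z

/-- The divisor `c^{γ,S}` on `G/S₀`: `c^{γ,S}_v = #{e ∈ S₀ ∩ S : γ(e) = v}`. -/
noncomputable def cGamma (S₀ S : Finset ℕ) : ℕ → ℤ :=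
  fun v => ((((S₀ ∩ S) ∩ G.E).filter (fun e => G.crep S₀ (G.ends e).1 = v)).card : ℤ)

/-- The relation "`q` is a value of `γ̄_*` at `p`" for the contraction
`γ : G → G/S₀` acting on classes of orientations: `q` is the restriction to
`(G/S₀) − γ_* S` of a representative of the class of `p` having no bioriented
edge in `S₀` (when `(G/S₀) − γ_*S` has no edges, any representative serves). -/
noncomputable def pushRel (S₀ : Finset ℕ) (b : ℕ) (p q : Finset ℕ × Orient) : Prop :=
  ∃ O', G.equivOr p.1 b O' p.2 ∧
    ((∀ e ∈ S₀, O' e ≠ some EdgeDir.bi) ∨ G.E \ (S₀ ∪ p.1) = ∅) ∧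
    q.1 = p.1 \ S₀ ∧ q.2 = restr O' (G.E \ (S₀ ∪ p.1))

/-! ### Isomorphisms and directed reachability -/

/-- `(fV, fE)` is an isomorphism from `G` to `H`. -/
def IsoMaps (H : WGraph) (fV fE : ℕ → ℕ) : Prop :=
  Set.BijOn fV ↑G.V ↑H.V ∧ Set.BijOn fE ↑G.E ↑H.E ∧
  (∀ e ∈ G.E, H.ends (fE e) = (fV (G.ends e).1, fV (G.ends e).2) ∨
              H.ends (fE e) = (fV (G.ends e).2, fV (G.ends e).1)) ∧
  (∀ v ∈ G.V, H.w (fV v) = G.w v)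

/-- `G` and `H` are isomorphic graphs. -/
def Iso (H : WGraph) : Prop := ∃ fV fE, G.IsoMaps H fV fE

/-- The edge-contraction relation: `G ≤ H` iff `H = G/S₀` (up to isomorphism)
for some `S₀ ⊆ E(G)`. -/
noncomputable def contractLE (H : WGraph) : Prop :=
  ∃ S₀ ⊆ G.E, (G.contract S₀).Iso H

/-- One step from `u` to `v` along an `O`-directed edge (a bioriented edge may
be traversed in both directions). -/
def dirStep (O : Orient) (u v : ℕ) : Prop :=
  ∃ e ∈ G.E,
    (O e = some EdgeDir.fwd ∧ G.ends e = (u, v)) ∨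
    (O e = some EdgeDir.bwd ∧ G.ends e = (v, u)) ∨
    (O e = some EdgeDir.bi ∧ (G.ends e = (u, v) ∨ G.ends e = (v, u)))

/-- There is an `O`-directed path from the (bioriented) edge `e` to the
vertex `v`: a directed path starting at one of the ends of `e` and ending
at `v`. -/
def dirReachFromEdge (O : Orient) (e v : ℕ) : Prop :=
  ∃ u, ((G.ends e).1 = u ∨ (G.ends e).2 = u) ∧
    Relation.ReflTransGen (G.dirStep O) u v

end WGraph

/-! ### Generic poset gadgets (for sets with an order, modulo an equivalence) -/

/-- `le` is a partial order on `{a | P a}` modulo the identification `eqv`. -/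
def IsPartialOrderOnMod {α : Type*} (P : α → Prop) (eqv le : α → α → Prop) : Prop :=
  (∀ a, P a → le a a) ∧
  (∀ a b c, P a → P b → P c → le a b → le b c → le a c) ∧
  (∀ a b, P a → P b → le a b → le b a → eqv a b)

/-- `le` is a partial order on `{a | P a}`. -/
def IsPartialOrderOn {α : Type*} (P : α → Prop) (le : α → α → Prop) : Prop :=
  IsPartialOrderOnMod P (· = ·) le

/-- `a'` covers `a` in `{a | P a}` ordered by `le`, modulo `eqv`. -/
def CoversOnMod {α : Type*} (P : α → Prop) (eqv le : α → α → Prop) (a a' : α) : Prop :=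
  P a ∧ P a' ∧ le a a' ∧ ¬ eqv a a' ∧
    ∀ c, P c → le a c → le c a' → (eqv c a ∨ eqv c a')

/-- `ρ` is a rank on `{a | P a}` ordered by `le`, modulo `eqv`:  along every
covering relation it increases by exactly `1`. -/
def IsRankOnMod {α : Type*} (P : α → Prop) (eqv le : α → α → Prop) (ρ : α → ℕ) : Prop :=
  ∀ a a', CoversOnMod P eqv le a a' → ρ a' = ρ a + 1

/-- `a'` covers `a` in `{a | P a}` ordered by `le`. -/
def CoversOn {α : Type*} (P : α → Prop) (le : α → α → Prop) : α → α → Prop :=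
  CoversOnMod P (· = ·) le

/-- `ρ` is a rank on `{a | P a}` ordered by `le`. -/
def IsRankOn {α : Type*} (P : α → Prop) (le : α → α → Prop) (ρ : α → ℕ) : Prop :=
  IsRankOnMod P (· = ·) le ρ

/-- `f` is a quotient of posets from `({a | P a}, lea)` onto `({b | Q b}, leb)`:
an order-preserving surjection such that any relation downstairs lifts to a
relation upstairs. -/
def IsPosetQuotient {α β : Type*} (P : α → Prop) (Q : β → Prop)
    (lea : α → α → Prop) (leb : β → β → Prop) (f : α → β) : Prop :=
  (∀ a, P a → Q (f a)) ∧
  (∀ a a', P a → P a' → lea a a' → leb (f a) (f a')) ∧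
  (∀ b, Q b → ∃ a, P a ∧ f a = b) ∧
  (∀ b b', Q b → Q b' → leb b b' →
    ∃ a a', P a ∧ P a' ∧ f a = b ∧ f a' = b' ∧ lea a a')

/-! ### Structures over the moduli of stable graphs -/

/-- Pairs `(G, S)` with `G` stable of genus `g` and `S ∈ A^b_G`. -/
noncomputable def PairStab (g b : ℕ) (p : WGraph × Finset ℕ) : Prop :=
  p.1.Stable g ∧ p.1.Ab b p.2

/-- Isomorphism of pairs `(G, S)`. -/
def PairIso (p q : WGraph × Finset ℕ) : Prop :=
  ∃ fV fE, p.1.IsoMaps q.1 fV fE ∧ p.2.image fE = q.2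

/-- The order on `A^b_g`: `(G,S) ≤ (H,T)` iff there is a contraction
`γ : G → H` (a contraction of `G` followed by an isomorphism onto `H`) with
`γ* T ⊆ S`. -/
noncomputable def AgLE (b : ℕ) (p q : WGraph × Finset ℕ) : Prop :=
  ∃ S₀ ⊆ p.1.E, ∃ fV fE, (p.1.contract S₀).IsoMaps q.1 fV fE ∧
    p.1.pullStar b (((p.1.contract S₀).E).filter fun e => fE e ∈ q.2) ⊆ p.2

/-- Triples `(G, S, O̅_S)` with `G` stable of genus `g`, `S ∈ A^b_G` and
`O_S ∈ 𝒪^b(G−S)` (representing elements of `𝒪̄𝒫^b_g`). -/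
noncomputable def TripP (g b : ℕ) (x : WGraph × Finset ℕ × Orient) : Prop :=
  x.1.Stable g ∧ x.1.Ab b x.2.1 ∧ x.1.MemOb x.2.1 b x.2.2

/-- Identification of triples: an isomorphism of the underlying graphs
carrying the subgraph and the class of the orientation (i.e. its divisor) of
one to the other. -/
noncomputable def TripEq (b : ℕ) (x y : WGraph × Finset ℕ × Orient) : Prop :=
  ∃ fV fE, x.1.IsoMaps y.1 fV fE ∧ x.2.1.image fE = y.2.1 ∧
    ∀ v ∈ x.1.V, y.1.divOr y.2.1 b y.2.2 (fV v) = x.1.divOr x.2.1 b x.2.2 v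

/-- The order on `𝒪̄𝒫^b_g`: `(G, O̅_S) ≤ (H, O̅_T)` iff there is a contraction
`γ : G → H` with `γ* T ⊆ S` and `γ̄_* O̅_S ≤ O̅_T`, the latter meaning that the
restriction of `O̅_T` to `H − γ_* S` equals `γ̄_* O̅_S` (compared through the
isomorphism, via the divisors). -/
noncomputable def OPgLE (b : ℕ) (x y : WGraph × Finset ℕ × Orient) : Prop :=
  ∃ S₀ ⊆ x.1.E, ∃ fV fE, (x.1.contract S₀).IsoMaps y.1 fV fE ∧
    x.1.pullStar b (((x.1.contract S₀).E).filter fun e => fE e ∈ y.2.1) ⊆ x.2.1 ∧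
    ∃ O', x.1.equivOr x.2.1 b O' x.2.2 ∧
      ((∀ e ∈ S₀, O' e ≠ some EdgeDir.bi) ∨ x.1.E \ (S₀ ∪ x.2.1) = ∅) ∧
      ∀ v ∈ (x.1.contract S₀).V,
        y.1.divOr ((x.2.1 \ S₀).image fE) b
            (restr y.2.2 (y.1.E \ (x.2.1 \ S₀).image fE)) (fV v)
          = (x.1.contract S₀).divOr (x.2.1 \ S₀) b
              (restr O' (x.1.E \ (S₀ ∪ x.2.1))) v

/-!
(a) ⇔ (b): a cut `E(Z, Zᶜ)` has an edge with target in `Zᶜ` exactly when a directed step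
leaves `Z`; so `O` is `e`-rooted iff no proper vertex set containing the ends of `e` is closed
under directed steps, i.e. iff everything is reachable from `e`.

(b) ⇒ (c): if `u` is an end of the bioriented edge `f` and the source of a one-way edge `g`,
biorienting `g` and orienting `f` away from `u` leaves every indegree `t_v` unchanged. Moving the
bioriented edge in this way along a simple directed path from `e` to the source of `e'` produces
an equivalent `1`-orientation bioriented at `e'`.

(c) ⇒ (a): suppose every edge of a cut `E(Z, Zᶜ)` with `e` inside `Z` points into `Z`, and take
`O' ∼ O` bioriented at an edge `e'` of the cut (nonempty since `G` is connected). Counting target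
ends in `Zᶜ`, `O` gets at most one from each edge of `G[Zᶜ]` and nothing else, while `O'` gets at
least one from each of these and one more from `e'`, contradicting `d^O = d^{O'}`.
-/

def IsOneWayFrom (d : Option EdgeDir) (p : ℕ × ℕ) (s : ℕ) : Prop :=
  (d = some EdgeDir.fwd ∧ p.1 = s) ∨ (d = some EdgeDir.bwd ∧ p.2 = s)

section dirT

variable {d : Option EdgeDir} {p : ℕ × ℕ} {s u : ℕ}

lemma IsOneWayFrom.ne_bi (h : IsOneWayFrom d p s) : d ≠ some EdgeDir.bi := by
  rcases h with ⟨rfl, -⟩ | ⟨rfl, -⟩ <;> simp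

lemma IsOneWayFrom.ne_none (h : IsOneWayFrom d p s) : d ≠ none := by
  rcases h with ⟨rfl, -⟩ | ⟨rfl, -⟩ <;> simp

lemma IsOneWayFrom.unique (h : IsOneWayFrom d p s) (h' : IsOneWayFrom d p u) : s = u := by
  rcases h with ⟨rfl, rfl⟩ | ⟨rfl, rfl⟩ <;> rcases h' with ⟨h, rfl⟩ | ⟨h, rfl⟩ <;> simp_all

lemma IsOneWayFrom.fst_eq_or_snd_eq (h : IsOneWayFrom d p s) : p.1 = s ∨ p.2 = s := by
  rcases h with ⟨-, h⟩ | ⟨-, h⟩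
  exacts [Or.inl h, Or.inr h]

lemma isOneWayFrom_ite (h : p.1 = u ∨ p.2 = u) :
    IsOneWayFrom (some (if p.1 = u then EdgeDir.fwd else EdgeDir.bwd)) p u := by
  by_cases h1 : p.1 = u
  · exact Or.inl ⟨by rw [if_pos h1], h1⟩
  · exact Or.inr ⟨by rw [if_neg h1], h.resolve_left h1⟩

lemma dirT_bi_eq (h : IsOneWayFrom d p s) (v : ℕ) :
    dirT (some EdgeDir.bi) p v = dirT d p v + if s = v then 1 else 0 := by
  rcases h with ⟨rfl, rfl⟩ | ⟨rfl, rfl⟩ <;> simp [dirT, add_comm]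

lemma dirT_eq_zero {v : ℕ} (h1 : p.1 ≠ v) (h2 : p.2 ≠ v) : dirT d p v = 0 := by
  rcases d with _ | _ | _ | _ <;> simp [dirT, h1, h2]

variable {W : Finset ℕ}

lemma sum_dirT_eq_zero (h1 : p.1 ∉ W) (h2 : p.2 ∉ W) : ∑ v ∈ W, dirT d p v = 0 :=
  Finset.sum_eq_zero fun _ hv =>
    dirT_eq_zero (fun h => h1 (h ▸ hv)) (fun h => h2 (h ▸ hv))

lemma sum_dirT_le_one (hd : d ≠ some EdgeDir.bi) : ∑ v ∈ W, dirT d p v ≤ 1 := by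
  rcases d with _ | _ | _ | _ <;> simp [dirT, Finset.sum_ite_eq] at hd ⊢ <;> split_ifs <;> simp

lemma one_le_sum_dirT (hd : d ≠ none) (h1 : p.1 ∈ W) (h2 : p.2 ∈ W) :
    1 ≤ ∑ v ∈ W, dirT d p v := by
  rcases d with _ | _ | _ | _ <;>
    simp [dirT, Finset.sum_ite_eq, Finset.sum_add_distrib, h1, h2] at hd ⊢

lemma one_le_sum_dirT_bi (h : p.1 ∈ W ∨ p.2 ∈ W) :
    1 ≤ ∑ v ∈ W, dirT (some EdgeDir.bi) p v := by
  rcases h with h | h <;> simp [dirT, Finset.sum_ite_eq, Finset.sum_add_distrib, h]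

end dirT

namespace Relation.ReflTransGen

variable {α : Type*} {r : α → α → Prop} {a b : α}

lemma exists_step_out {P : α → Prop} (h : ReflTransGen r a b) (ha : P a) (hb : ¬ P b) :
    ∃ x y, P x ∧ ¬ P y ∧ r x y := by
  induction h with
  | refl => exact absurd ha hb
  | @tail m c _ hmc ih =>
    by_cases hm : P m
    · exact ⟨m, c, hm, hb, hmc⟩
    · exact ih hm

/-- Split a walk from `a` after its last visit to `a`. -/
lemma eq_or_exists_head_avoiding (h : ReflTransGen r a b) :
    a = b ∨ ∃ c, r a c ∧ ReflTransGen (fun p q => r p q ∧ p ≠ a ∧ q ≠ a) c b := by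
  induction h with
  | refl => exact Or.inl rfl
  | @tail m c _ hmc ih =>
    by_cases hc : c = a
    · exact Or.inl hc.symm
    by_cases hm : m = a
    · exact Or.inr ⟨c, hm ▸ hmc, .refl⟩
    obtain ⟨c', hac', hc'm⟩ := ih.resolve_left (Ne.symm hm)
    exact Or.inr ⟨c', hac', hc'm.tail ⟨hmc, hm, hc⟩⟩

end Relation.ReflTransGen

namespace WGraph

variable (G : WGraph) {O O' : Orient}

lemma mem_biE {x : ℕ} : x ∈ G.biE O ↔ x ∈ G.E ∧ O x = some EdgeDir.bi := Finset.mem_filter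

lemma mem_of_biE_eq_singleton {f : ℕ} (hbi : G.biE O = {f}) :
    f ∈ G.E ∧ O f = some EdgeDir.bi :=
  G.mem_biE.1 (hbi ▸ Finset.mem_singleton_self f)

lemma eq_of_biE_eq_singleton {f x : ℕ} (hbi : G.biE O = {f}) (hx : x ∈ G.E)
    (h : O x = some EdgeDir.bi) : x = f :=
  Finset.mem_singleton.1 (hbi ▸ G.mem_biE.2 ⟨hx, h⟩)

lemma mem_E_of_isOrientOn {x : ℕ} (hO : G.IsOrientOn ∅ O) (hx : O x ≠ none) : x ∈ G.E := by
  simpa using (hO x).1 hx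

lemma dirStep_iff {u v : ℕ} : G.dirStep O u v ↔
    ∃ x ∈ G.E, (G.ends x = (u, v) ∨ G.ends x = (v, u)) ∧ 0 < dirT (O x) (G.ends x) v := by
  constructor
  · rintro ⟨x, hx, ⟨hd, he⟩ | ⟨hd, he⟩ | ⟨hd, he | he⟩⟩ <;>
      exact ⟨x, hx, by simp [he], by simp [hd, he, dirT]⟩
  · rintro ⟨x, hx, hends, hpos⟩
    refine ⟨x, hx, ?_⟩
    rcases hd : O x with _ | _ | _ | _ <;> rw [hd] at hpos <;>
      rcases hends with he | he <;> rw [he] at hpos ⊢ <;> simp [dirT] at hpos ⊢ <;>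
      split_ifs at hpos with h <;> simp_all

lemma mem_V_of_dirStep {u v : ℕ} (h : G.dirStep O u v) : u ∈ G.V ∧ v ∈ G.V := by
  obtain ⟨x, hx, he, -⟩ := G.dirStep_iff.1 h
  have := G.ends_mem x hx
  rcases he with he | he <;> rw [he] at this <;> simp_all

lemma mem_cutEdges {Z : Finset ℕ} {x : ℕ} : x ∈ G.cutEdges ∅ Z ↔ x ∈ G.E ∧
    (((G.ends x).1 ∈ Z ∧ (G.ends x).2 ∉ Z) ∨ ((G.ends x).1 ∉ Z ∧ (G.ends x).2 ∈ Z)) := by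
  simp [cutEdges]

lemma exists_cutEdge_target_compl_iff {Z : Finset ℕ} :
    (∃ x ∈ G.cutEdges ∅ Z, ∃ v ∈ G.V \ Z, 0 < dirT (O x) (G.ends x) v) ↔
      ∃ u ∈ Z, ∃ v ∉ Z, G.dirStep O u v := by
  constructor
  · rintro ⟨x, hx, v, hv, hpos⟩
    rw [mem_cutEdges] at hx
    rw [Finset.mem_sdiff] at hv
    obtain ⟨hxE, ⟨h1, h2⟩ | ⟨h1, h2⟩⟩ := hx
    · have hv2 : (G.ends x).2 = v := by
        by_contra h
        exact hpos.ne' (dirT_eq_zero (fun h' => hv.2 (h' ▸ h1)) h)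
      exact ⟨_, h1, v, hv.2, G.dirStep_iff.2 ⟨x, hxE, Or.inl (by rw [← hv2]), hpos⟩⟩
    · have hv1 : (G.ends x).1 = v := by
        by_contra h
        exact hpos.ne' (dirT_eq_zero h (fun h' => hv.2 (h' ▸ h2)))
      exact ⟨_, h2, v, hv.2, G.dirStep_iff.2 ⟨x, hxE, Or.inr (by rw [← hv1]), hpos⟩⟩
  · rintro ⟨u, hu, v, hv, hstep⟩
    obtain ⟨x, hxE, hends, hpos⟩ := G.dirStep_iff.1 hstep
    refine ⟨x, G.mem_cutEdges.2 ⟨hxE, ?_⟩, v,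
      Finset.mem_sdiff.2 ⟨(G.mem_V_of_dirStep hstep).2, hv⟩, hpos⟩
    rcases hends with h | h <;> rw [h] <;> simp [hu, hv]

lemma dirReachFromEdge_of_rootedAt {e : ℕ} (he : e ∈ G.E) (h : G.RootedAt ∅ O e) :
    ∀ v ∈ G.V, G.dirReachFromEdge O e v := by
  set Z := G.V.filter (G.dirReachFromEdge O e)
  suffices hZ : Z = G.V from fun v hv => (Finset.mem_filter.1 (hZ ▸ hv)).2
  by_contra hZV
  have hends : (G.ends e).1 ∈ Z ∧ (G.ends e).2 ∈ Z :=
    ⟨Finset.mem_filter.2 ⟨(G.ends_mem e he).1, _, Or.inl rfl, .refl⟩,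
     Finset.mem_filter.2 ⟨(G.ends_mem e he).2, _, Or.inr rfl, .refl⟩⟩
  obtain ⟨u, hu, v, hv, huv⟩ := G.exists_cutEdge_target_compl_iff.1 <|
    h Z (Finset.filter_subset _ _) hZV (by simp [indEdges, he, hends])
  obtain ⟨w, hw, hwu⟩ := (Finset.mem_filter.1 hu).2
  exact hv (Finset.mem_filter.2 ⟨(G.mem_V_of_dirStep huv).2, w, hw, hwu.tail huv⟩)

lemma rootedAt_of_forall_dirReachFromEdge {e : ℕ} (h : ∀ v ∈ G.V, G.dirReachFromEdge O e v) :
    G.RootedAt ∅ O e := by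
  intro Z hZ hZV he
  obtain ⟨v, hv, hvZ⟩ := Finset.exists_of_ssubset (hZ.ssubset_of_ne hZV)
  obtain ⟨u, hu, huv⟩ := h v hv
  have huZ : u ∈ Z := by
    simp only [indEdges, Finset.mem_filter] at he
    rcases hu with rfl | rfl
    exacts [he.2.1, he.2.2]
  obtain ⟨x, y, hx, hy, hxy⟩ := huv.exists_step_out (P := (· ∈ Z)) huZ hvZ
  exact G.exists_cutEdge_target_compl_iff.2 ⟨x, hx, y, hy, hxy⟩

lemma tOr_eq_of_equivOr {b : ℕ} (hE : G.E.Nonempty) (h : G.equivOr ∅ b O O') {v : ℕ}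
    (hv : v ∈ G.V) : G.tOr O v = G.tOr O' v := by
  have := congrFun h.2.2 v
  simp only [divOr, hv, if_true, Finset.sdiff_empty, hE.ne_empty, if_false] at this
  omega

lemma Connected.cutEdges_nonempty {G : WGraph} (hG : G.Connected) {Z : Finset ℕ}
    (hZ : Z ⊆ G.V) (hne : Z.Nonempty) (hZV : Z ≠ G.V) : (G.cutEdges ∅ Z).Nonempty := by
  rw [Finset.nonempty_iff_ne_empty]
  intro hcut
  obtain ⟨z, hz⟩ := hne
  obtain ⟨y, hy, hyZ⟩ := Finset.exists_of_ssubset (hZ.ssubset_of_ne hZV)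
  let adj := fun a b : {x // x ∈ G.V} => G.adjOn G.E a.1 b.1
  have hadj : ∀ a b, adj a b → (a.1 ∈ Z) = (b.1 ∈ Z) := by
    rintro a b ⟨x, hx, hends⟩
    have hx' : x ∉ G.cutEdges ∅ Z := by rw [hcut]; exact Finset.notMem_empty x
    rw [G.mem_cutEdges] at hx'
    rcases hends with h | h <;> rw [h] at hx' <;> simp at hx' hx <;> apply propext <;> tauto
  have : Subsingleton (Quot adj) := (Nat.card_eq_one_iff_unique.1 hG).1
  have := congrArg (Quot.lift _ hadj)
    (Subsingleton.elim (Quot.mk adj ⟨z, hZ hz⟩) (Quot.mk adj ⟨y, hy⟩))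
  exact hyZ (cast this hz)

lemma sum_tOr_eq_sum_sum (O : Orient) (W : Finset ℕ) :
    ∑ v ∈ W, G.tOr O v = ∑ x ∈ G.E, ∑ v ∈ W, dirT (O x) (G.ends x) v :=
  Finset.sum_comm

lemma sum_tOr_compl_lt {e e' : ℕ} {Z : Finset ℕ} (hbi : G.biE O = {e})
    (he : (G.ends e).1 ∈ Z ∧ (G.ends e).2 ∈ Z)
    (hno : ¬ ∃ x ∈ G.cutEdges ∅ Z, ∃ v ∈ G.V \ Z, 0 < dirT (O x) (G.ends x) v)
    (hO' : G.IsOrientOn ∅ O') (hbi' : G.biE O' = {e'}) (he' : e' ∈ G.cutEdges ∅ Z) :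
    ∑ v ∈ G.V \ Z, G.tOr O v < ∑ v ∈ G.V \ Z, G.tOr O' v := by
  rw [sum_tOr_eq_sum_sum, sum_tOr_eq_sum_sum]
  have hcut : ∀ x ∈ G.cutEdges ∅ Z, ∑ v ∈ G.V \ Z, dirT (O x) (G.ends x) v = 0 :=
    fun x hx => Finset.sum_eq_zero fun v hv =>
      Nat.eq_zero_of_not_pos fun h => hno ⟨x, hx, v, hv, h⟩
  obtain ⟨he'E, he'Z⟩ := G.mem_cutEdges.1 he'
  refine Finset.sum_lt_sum (fun x hx => ?_) ⟨e', he'E, ?_⟩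
  · by_cases hxc : x ∈ G.cutEdges ∅ Z
    · rw [hcut x hxc]
      exact Nat.zero_le _
    have hV := G.ends_mem x hx
    by_cases h1 : (G.ends x).1 ∈ Z
    · have h2 : (G.ends x).2 ∈ Z := by
        by_contra h2
        exact hxc (G.mem_cutEdges.2 ⟨hx, Or.inl ⟨h1, h2⟩⟩)
      rw [sum_dirT_eq_zero (by simp [h1]) (by simp [h2])]
      exact Nat.zero_le _
    · have h2 : (G.ends x).2 ∉ Z := fun h2 => hxc (G.mem_cutEdges.2 ⟨hx, Or.inr ⟨h1, h2⟩⟩)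
      have hxe : x ≠ e := by rintro rfl; exact h1 he.1
      calc ∑ v ∈ G.V \ Z, dirT (O x) (G.ends x) v
          ≤ 1 := sum_dirT_le_one fun h => hxe (G.eq_of_biE_eq_singleton hbi hx h)
        _ ≤ _ := one_le_sum_dirT (fun h => (hO' x).2 (by simp [hx]) h)
            (by simp [hV.1, h1]) (by simp [hV.2, h2])
  · rw [hcut e' he', (G.mem_of_biE_eq_singleton hbi').2]
    refine one_le_sum_dirT_bi ?_
    have hV := G.ends_mem e' he'E
    rcases he'Z with h | h
    · exact Or.inr (by simp [hV.2, h.2])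
    · exact Or.inl (by simp [hV.1, h.1])

lemma rootedAt_of_forall_exists_equivOr (hG : G.Connected) {e : ℕ} (hbi : G.biE O = {e})
    (h : ∀ e' ∈ G.E, ∃ O' : Orient, G.biE O' = {e'} ∧ G.equivOr ∅ 1 O O') :
    G.RootedAt ∅ O e := by
  intro Z hZ hZV he
  simp only [indEdges, Finset.sdiff_empty, Finset.mem_filter] at he
  by_contra hno
  obtain ⟨e', he'⟩ := hG.cutEdges_nonempty hZ ⟨_, he.2.1⟩ hZV
  obtain ⟨O', hbi', hequiv⟩ := h e' (G.mem_cutEdges.1 he').1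
  have hlt := G.sum_tOr_compl_lt hbi he.2 hno hequiv.2.1 hbi' he'
  rw [Finset.sum_congr rfl fun v hv =>
    G.tOr_eq_of_equivOr ⟨e, he.1⟩ hequiv (Finset.mem_sdiff.1 hv).1] at hlt
  exact lt_irrefl _ hlt

lemma isOrientOn_update {S : Finset ℕ} (h : G.IsOrientOn S O) {x : ℕ} (hx : x ∈ G.E \ S)
    (d : EdgeDir) : G.IsOrientOn S (Function.update O x (some d)) := by
  intro y
  by_cases hy : y = x
  · subst hy
    simp [hx]
  · rw [Function.update_of_ne hy]
    exact h y

lemma tOr_update {x : ℕ} (hx : x ∈ G.E) (O : Orient) (d : Option EdgeDir) (v : ℕ) :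
    G.tOr (Function.update O x d) v + dirT (O x) (G.ends x) v =
      G.tOr O v + dirT d (G.ends x) v := by
  have hrest : ∀ y ∈ G.E.erase x,
      dirT (Function.update O x d y) (G.ends y) v = dirT (O y) (G.ends y) v :=
    fun y hy => by rw [Function.update_of_ne (Finset.ne_of_mem_erase hy)]
  rw [tOr, tOr, ← Finset.add_sum_erase _ _ hx, ← Finset.add_sum_erase _ _ hx,
    Function.update_self, Finset.sum_congr rfl hrest]
  ring

lemma dirStep_of_agree {p q u : ℕ} (h : G.dirStep O p q) (hp : p ≠ u) (hq : q ≠ u)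
    (hagree : ∀ x ∈ G.E, (G.ends x).1 ≠ u → (G.ends x).2 ≠ u → O' x = O x) :
    G.dirStep O' p q := by
  obtain ⟨x, hx, hends, hpos⟩ := G.dirStep_iff.1 h
  refine G.dirStep_iff.2 ⟨x, hx, hends, ?_⟩
  rwa [hagree x hx (by rcases hends with h | h <;> simp [h, hp, hq])
    (by rcases hends with h | h <;> simp [h, hp, hq])]

lemma exists_edge_of_dirStep {u v : ℕ} (h : G.dirStep O u v) :
    ∃ g ∈ G.E, ((G.ends g).1 = v ∨ (G.ends g).2 = v) ∧
      (O g = some EdgeDir.bi ∨ IsOneWayFrom (O g) (G.ends g) u) := by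
  obtain ⟨g, hg, ⟨hd, he⟩ | ⟨hd, he⟩ | ⟨hd, he | he⟩⟩ := h <;>
    exact ⟨g, hg, by simp [he, hd, IsOneWayFrom]⟩

def moveBi (O : Orient) (f g u : ℕ) : Orient :=
  Function.update (Function.update O f
    (some (if (G.ends f).1 = u then EdgeDir.fwd else EdgeDir.bwd))) g (some EdgeDir.bi)

section moveBi

variable {f g u : ℕ}

lemma moveBi_apply_of_ne {x : ℕ} (hf : x ≠ f) (hg : x ≠ g) : G.moveBi O f g u x = O x := by
  simp [moveBi, hf, hg]

lemma isOrientOn_moveBi (hO : G.IsOrientOn ∅ O) (hf : f ∈ G.E) (hg : g ∈ G.E) :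
    G.IsOrientOn ∅ (G.moveBi O f g u) :=
  G.isOrientOn_update (G.isOrientOn_update hO (by simpa using hf) _) (by simpa using hg) _

lemma biE_moveBi (hbi : G.biE O = {f}) (hg : g ∈ G.E) (hgf : g ≠ f) :
    G.biE (G.moveBi O f g u) = {g} := by
  ext x
  rw [mem_biE, Finset.mem_singleton]
  constructor
  · rintro ⟨hx, h⟩
    by_contra hxg
    by_cases hxf : x = f
    · subst hxf
      simp [moveBi, hxg] at h
      split_ifs at h
    · rw [moveBi_apply_of_ne G hxf hxg] at h
      exact hxf (G.eq_of_biE_eq_singleton hbi hx h)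
  · rintro rfl
    exact ⟨hg, by simp [moveBi]⟩

lemma tOr_moveBi (hbi : G.biE O = {f}) (hu : (G.ends f).1 = u ∨ (G.ends f).2 = u)
    (hg : IsOneWayFrom (O g) (G.ends g) u) (hgE : g ∈ G.E) :
    G.tOr (G.moveBi O f g u) = G.tOr O := by
  obtain ⟨hfE, hfbi⟩ := G.mem_of_biE_eq_singleton hbi
  have hgf : g ≠ f := fun h => hg.ne_bi (h ▸ hfbi)
  funext v
  have hf' := G.tOr_update hfE O
    (some (if (G.ends f).1 = u then EdgeDir.fwd else EdgeDir.bwd)) v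
  have hg' := G.tOr_update hgE (Function.update O f
    (some (if (G.ends f).1 = u then EdgeDir.fwd else EdgeDir.bwd))) (some EdgeDir.bi) v
  rw [Function.update_of_ne hgf, dirT_bi_eq hg] at hg'
  rw [hfbi, dirT_bi_eq (isOneWayFrom_ite hu)] at hf'
  unfold moveBi
  omega

end moveBi

lemma exists_biE_eq_singleton_of_walk {e' s f u : ℕ} {W : Finset ℕ} (hO : G.IsOrientOn ∅ O)
    (hbi : G.biE O = {f}) (hu : (G.ends f).1 = u ∨ (G.ends f).2 = u)
    (he' : IsOneWayFrom (O e') (G.ends e') s)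
    (hwalk : Relation.ReflTransGen (fun p q => G.dirStep O p q ∧ p ∈ W ∧ q ∈ W) u s) :
    ∃ O' : Orient, G.IsOrientOn ∅ O' ∧ G.biE O' = {e'} ∧ G.tOr O' = G.tOr O := by
  -- Deleting `u` from `W` after each move keeps the rest of the walk off `f` and `g`,
  -- the only edges the move changes.
  induction W using Finset.strongInduction generalizing O f u with
  | H W ih =>
  obtain ⟨hfE, hfbi⟩ := G.mem_of_biE_eq_singleton hbi
  have he'E : e' ∈ G.E := G.mem_E_of_isOrientOn hO he'.ne_none
  have he'f : e' ≠ f := fun h => he'.ne_bi (h ▸ hfbi)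
  by_cases hsu : s = u
  · subst hsu
    exact ⟨G.moveBi O f e' s, G.isOrientOn_moveBi hO hfE he'E, G.biE_moveBi hbi he'E he'f,
      G.tOr_moveBi hbi hu he' he'E⟩
  obtain ⟨c, ⟨huc, huW, -⟩, hcs⟩ :=
    hwalk.eq_or_exists_head_avoiding.resolve_left (Ne.symm hsu)
  have hsub : W.erase u ⊂ W := Finset.erase_ssubset huW
  have transfer : ∀ O' : Orient,
      (∀ x ∈ G.E, (G.ends x).1 ≠ u → (G.ends x).2 ≠ u → O' x = O x) →
      Relation.ReflTransGen
        (fun p q => G.dirStep O' p q ∧ p ∈ W.erase u ∧ q ∈ W.erase u) c s :=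
    fun O' hagree => Relation.ReflTransGen.mono (fun p q ⟨⟨hpq, hp, hq⟩, hpu, hqu⟩ =>
      ⟨G.dirStep_of_agree hpq hpu hqu hagree, Finset.mem_erase.2 ⟨hpu, hp⟩,
        Finset.mem_erase.2 ⟨hqu, hq⟩⟩) _ _ hcs
  obtain ⟨g, hgE, hcg, hgbi | hg⟩ := G.exists_edge_of_dirStep huc
  · obtain rfl := G.eq_of_biE_eq_singleton hbi hgE hgbi
    exact ih _ hsub hO hbi hcg he' (transfer O fun _ _ _ _ => rfl)
  · have hgf : g ≠ f := fun h => hg.ne_bi (h ▸ hfbi)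
    have he'g : e' ≠ g := by
      rintro rfl
      exact hsu (he'.unique hg)
    have hagree : ∀ x ∈ G.E, (G.ends x).1 ≠ u → (G.ends x).2 ≠ u →
        G.moveBi O f g u x = O x := by
      intro x _ hx1 hx2
      refine moveBi_apply_of_ne G ?_ ?_ <;> rintro rfl
      · rcases hu with h | h
        exacts [hx1 h, hx2 h]
      · rcases hg.fst_eq_or_snd_eq with h | h
        exacts [hx1 h, hx2 h]
    obtain ⟨O', hO', hbi', htOr⟩ := ih _ hsub
      (G.isOrientOn_moveBi hO hfE hgE) (G.biE_moveBi hbi hgE hgf) hcg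
      (by rwa [moveBi_apply_of_ne G he'f he'g]) (transfer _ hagree)
    exact ⟨O', hO', hbi', htOr.trans (G.tOr_moveBi hbi hu hg hgE)⟩

lemma exists_equivOr_of_forall_dirReachFromEdge (hO : G.IsOrientOn ∅ O) {e : ℕ}
    (hbi : G.biE O = {e}) (hreach : ∀ v ∈ G.V, G.dirReachFromEdge O e v) {e' : ℕ}
    (he' : e' ∈ G.E) :
    ∃ O' : Orient, G.biE O' = {e'} ∧ G.equivOr ∅ 1 O O' := by
  by_cases hee : e' = e
  · subst hee
    exact ⟨O, hbi, hO, hO, rfl⟩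
  obtain ⟨s, hs⟩ : ∃ s, IsOneWayFrom (O e') (G.ends e') s := by
    rcases hd : O e' with _ | _ | _ | _
    · exact absurd hd ((hO e').2 (by simp [he']))
    · exact ⟨_, Or.inl ⟨rfl, rfl⟩⟩
    · exact ⟨_, Or.inr ⟨rfl, rfl⟩⟩
    · exact absurd (G.eq_of_biE_eq_singleton hbi he' hd) hee
  have hsV : s ∈ G.V := by
    rcases hs.fst_eq_or_snd_eq with h | h <;> rw [← h]
    exacts [(G.ends_mem e' he').1, (G.ends_mem e' he').2]
  obtain ⟨u, hu, hus⟩ := hreach s hsV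
  obtain ⟨O', hO', hbi', htOr⟩ := G.exists_biE_eq_singleton_of_walk hO hbi hu hs
    (Relation.ReflTransGen.mono (fun _ _ h => ⟨h, G.mem_V_of_dirStep h⟩) _ _ hus)
  exact ⟨O', hbi', hO, hO', by unfold divOr; rw [htOr]⟩

end WGraph

/-- For a non-empty `1`-orientation `O` on a connected graph
`G` with bioriented edge `e`, the following are equivalent: (a) `O` is
`e`-rooted; (b) every vertex is reachable by an `O`-directed path from `e`;
(c) for every edge `e'` there is an equivalent `1`-orientation whose
bioriented edge is `e'`. -/
theorem rooted_iff_reachable_iff_movable (G : WGraph) (hG : G.Connected)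
    (O : Orient) (e : ℕ) (hO : G.IsOrientOn ∅ O) (hbi : G.biE O = {e}) :
    (G.RootedAt ∅ O e ↔ ∀ v ∈ G.V, G.dirReachFromEdge O e v) ∧
    (G.RootedAt ∅ O e ↔ ∀ e' ∈ G.E, ∃ O' : Orient,
        G.biE O' = {e'} ∧ G.equivOr ∅ 1 O O') := by
  have hab : G.RootedAt ∅ O e ↔ ∀ v ∈ G.V, G.dirReachFromEdge O e v :=
    ⟨G.dirReachFromEdge_of_rootedAt (G.mem_of_biE_eq_singleton hbi).1,
      G.rootedAt_of_forall_dirReachFromEdge⟩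
  exact ⟨hab, fun h _ he' => G.exists_equivOr_of_forall_dirReachFromEdge hO hbi (hab.1 h) he',
    G.rootedAt_of_forall_exists_equivOr hG hbi⟩
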